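/- Let G be a finite simple graph on n ≥ 2 vertices. If G contains a subgraph isomorphic to the path P_n on all n vertices (i.e., G has a Hamiltonian path), then γ(M(G)) = ⌈n/2⌉, where γ denotes the domination number. -/

import Mathlib

/-- `S` is a dominating set of the graph `H`. -/
def IsDomSet {V : Type*} (H : SimpleGraph V) (S : Set V) : Prop :=
  ∀ v : V, v ∈ S ∨ ∃ s ∈ S, H.Adj v s

/-- The domination number of a graph `H`. -/
noncomputable def domNum {V : Type*} (H : SimpleGraph V) : ℕ :=
  sInf {k : ℕ | ∃ S : Set V, IsDomSet H S ∧ S.ncard = k}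

/-- The middle graph `M(G)` of a graph `G`: its vertices are the vertices and edges
of `G`; a vertex is adjacent to the edges incident to it, and two edges are adjacent
iff they are distinct and share an endpoint. -/
def middleGraph {V : Type*} (G : SimpleGraph V) : SimpleGraph (V ⊕ G.edgeSet) where
  Adj x y :=
    match x, y with
    | Sum.inl _, Sum.inl _ => False
    | Sum.inl v, Sum.inr e => v ∈ (e : Sym2 V)
    | Sum.inr e, Sum.inl v => v ∈ (e : Sym2 V)
    | Sum.inr e, Sum.inr f => e ≠ f ∧ ∃ v, v ∈ (e : Sym2 V) ∧ v ∈ (f : Sym2 V)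
  symm := by
    constructor
    rintro (v | e) (w | f) h
    · exact h.elim
    · exact h
    · exact h
    · exact ⟨Ne.symm h.1, h.2.imp fun v hv => ⟨hv.2, hv.1⟩⟩
  loopless := by
    constructor
    rintro (v | e) h
    · exact h.elim
    · exact h.1 rfl

/-!
A vertex of `M(G)` dominates at most two vertices of `G` (itself, or the two endpoints of an
edge), so `γ(M(G)) ≥ n/2`. Conversely, along a Hamiltonian path `v₀ v₁ … v_{n-1}` the edges
`v₀v₁, v₂v₃, …`, together with `v_{n-1}` when `n` is odd, dominate every vertex of `G`; a set
dominating all vertices of `G` dominates all of `M(G)`, since every edge has an endpoint.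
-/

theorem isDomSet_univ {V : Type*} (H : SimpleGraph V) : IsDomSet H Set.univ :=
  fun _ => Or.inl trivial

theorem domNum_le_ncard {V : Type*} {H : SimpleGraph V} {S : Set V} (hS : IsDomSet H S) :
    domNum H ≤ S.ncard :=
  Nat.sInf_le ⟨S, hS, rfl⟩

theorem exists_isDomSet_ncard_eq_domNum {V : Type*} (H : SimpleGraph V) :
    ∃ S, IsDomSet H S ∧ S.ncard = domNum H :=
  Nat.sInf_mem (s := {k | ∃ S, IsDomSet H S ∧ S.ncard = k}) ⟨_, Set.univ, isDomSet_univ H, rfl⟩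

section middleGraph

variable {V : Type*} {G : SimpleGraph V}

@[simp] theorem middleGraph_adj_inl_inl (v w : V) :
    ¬ (middleGraph G).Adj (Sum.inl v) (Sum.inl w) :=
  id

@[simp] theorem middleGraph_adj_inl_inr (v : V) (e : G.edgeSet) :
    (middleGraph G).Adj (Sum.inl v) (Sum.inr e) ↔ v ∈ (e : Sym2 V) :=
  Iff.rfl

theorem isDomSet_middleGraph_of_dominates_inl {S : Set (V ⊕ G.edgeSet)}
    (hS : ∀ w, Sum.inl w ∈ S ∨ ∃ s ∈ S, (middleGraph G).Adj (Sum.inl w) s) :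
    IsDomSet (middleGraph G) S := by
  rintro (w | e)
  · exact hS w
  obtain ⟨a, ha⟩ : ∃ a, a ∈ (e : Sym2 V) := ⟨_, Sym2.out_fst_mem _⟩
  rcases hS a with ha' | ⟨(b | f), hf, hadj⟩
  · exact Or.inr ⟨Sum.inl a, ha', ha⟩
  · exact (middleGraph_adj_inl_inl a b hadj).elim
  · by_cases hef : e = f
    · exact Or.inl (hef ▸ hf)
    · exact Or.inr ⟨Sum.inr f, hf, hef, a, ha, hadj⟩

theorem ncard_setOf_dominated_inl_le_two (s : V ⊕ G.edgeSet) :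
    {w : V | Sum.inl w = s ∨ (middleGraph G).Adj (Sum.inl w) s}.ncard ≤ 2 := by
  rcases s with x | e
  · calc _ ≤ ({x} : Set V).ncard := Set.ncard_le_ncard (by simp)
      _ ≤ 2 := by simp
  · rcases e with ⟨⟨x, y⟩, he⟩
    calc _ ≤ ({x, y} : Set V).ncard := Set.ncard_le_ncard (by intro w; simp)
      _ ≤ 2 := (Set.ncard_insert_le _ _).trans (by simp)

theorem card_le_two_mul_ncard_of_isDomSet [Finite V] {S : Set (V ⊕ G.edgeSet)}
    (hS : IsDomSet (middleGraph G) S) : Nat.card V ≤ 2 * S.ncard := by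
  set D : V ⊕ G.edgeSet → Set V := fun s =>
    {w | Sum.inl w = s ∨ (middleGraph G).Adj (Sum.inl w) s}
  have hS_fin : S.Finite := S.toFinite
  have hcover : Set.univ ⊆ ⋃ s ∈ hS_fin.toFinset, D s := by
    intro w _
    rcases hS (Sum.inl w) with hw | ⟨s, hs, hadj⟩
    · exact Set.mem_biUnion (hS_fin.mem_toFinset.2 hw) (Or.inl rfl)
    · exact Set.mem_biUnion (hS_fin.mem_toFinset.2 hs) (Or.inr hadj)
  calc Nat.card V = (Set.univ : Set V).ncard := Set.ncard_univ V |>.symm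
    _ ≤ (⋃ s ∈ hS_fin.toFinset, D s).ncard := Set.ncard_le_ncard hcover
    _ ≤ ∑ s ∈ hS_fin.toFinset, (D s).ncard := Finset.set_ncard_biUnion_le _ _
    _ ≤ ∑ _s ∈ hS_fin.toFinset, 2 :=
      Finset.sum_le_sum fun s _ => ncard_setOf_dominated_inl_le_two s
    _ = 2 * S.ncard := by rw [Finset.sum_const, smul_eq_mul, mul_comm, Set.ncard_eq_toFinset_card]

theorem card_le_two_mul_domNum_middleGraph [Finite V] (G : SimpleGraph V) :
    Nat.card V ≤ 2 * domNum (middleGraph G) := by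
  obtain ⟨S, hS, hcard⟩ := exists_isDomSet_ncard_eq_domNum (middleGraph G)
  exact hcard ▸ card_le_two_mul_ncard_of_isDomSet hS

end middleGraph

namespace SimpleGraph.Walk

variable {V : Type*} {G : SimpleGraph V}

def alternateCover : {u v : V} → G.Walk u v → Set (V ⊕ G.edgeSet)
  | u, _, .nil => {Sum.inl u}
  | _, _, .cons h .nil => {Sum.inr ⟨_, G.mem_edgeSet.2 h⟩}
  | _, _, .cons h (.cons _ p) => insert (Sum.inr ⟨_, G.mem_edgeSet.2 h⟩) p.alternateCover

theorem ncard_alternateCover_le : {u v : V} → (p : G.Walk u v) →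
    p.alternateCover.ncard ≤ (p.length + 2) / 2
  | _, _, .nil => by simp [alternateCover]
  | _, _, .cons _ .nil => by simp [alternateCover]
  | _, _, .cons h (.cons _ p) => by
    have := p.ncard_alternateCover_le
    have := Set.ncard_insert_le (Sum.inr ⟨_, G.mem_edgeSet.2 h⟩) p.alternateCover
    simp only [alternateCover, length_cons]
    omega

theorem alternateCover_dominates : {u v : V} → (p : G.Walk u v) → ∀ w ∈ p.support,
    Sum.inl w ∈ p.alternateCover ∨ ∃ s ∈ p.alternateCover, (middleGraph G).Adj (Sum.inl w) s
  | _, _, .nil, w, hw => by simp_all [alternateCover]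
  | _, _, .cons _ .nil, w, hw => Or.inr ⟨_, rfl, by simpa using hw⟩
  | _, _, .cons _ (.cons _ p), w, hw => by
    rcases List.mem_cons.1 hw with rfl | hw
    · exact Or.inr ⟨_, Set.mem_insert _ _, by simp⟩
    rcases List.mem_cons.1 hw with rfl | hw
    · exact Or.inr ⟨_, Set.mem_insert _ _, by simp⟩
    rcases p.alternateCover_dominates w hw with hw | ⟨s, hs, hadj⟩
    · exact Or.inl (Set.mem_insert_of_mem _ hw)
    · exact Or.inr ⟨s, Set.mem_insert_of_mem _ hs, hadj⟩

end SimpleGraph.Walk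

theorem domNum_middleGraph_le_of_isHamiltonian {V : Type*} [Fintype V] [DecidableEq V]
    {G : SimpleGraph V} {u v : V} {p : G.Walk u v} (hp : p.IsHamiltonian) :
    domNum (middleGraph G) ≤ (Fintype.card V + 1) / 2 :=
  calc domNum (middleGraph G) ≤ p.alternateCover.ncard :=
        domNum_le_ncard <| isDomSet_middleGraph_of_dominates_inl fun w =>
          p.alternateCover_dominates w (hp.mem_support w)
    _ ≤ (p.length + 2) / 2 := p.ncard_alternateCover_le
    _ = (Fintype.card V + 1) / 2 := by rw [← hp.length_support, p.length_support]

theorem domNum_middle_of_hamiltonian_path_general {V : Type*} [Fintype V] [DecidableEq V]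
    (G : SimpleGraph V) (n : ℕ) (hord : Fintype.card V = n)
    (hham : ∃ (u v : V) (P : G.Walk u v), P.IsHamiltonian) :
    domNum (middleGraph G) = (n + 1) / 2 := by
  obtain ⟨u, v, P, hP⟩ := hham
  have hlower := card_le_two_mul_domNum_middleGraph G
  have hupper := domNum_middleGraph_le_of_isHamiltonian hP
  rw [Nat.card_eq_fintype_card, hord] at hlower
  rw [hord] at hupper
  omega

/-- If a graph `G` on `n ≥ 2` vertices has a Hamiltonian path, then
`γ(M(G)) = ⌈n/2⌉`. -/
theorem domNum_middle_of_hamiltonian_path {V : Type*} [Fintype V] [DecidableEq V]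
    (G : SimpleGraph V) (n : ℕ) (hord : Fintype.card V = n) (hn : 2 ≤ n)
    (hham : ∃ (u v : V) (P : G.Walk u v), P.IsHamiltonian) :
    domNum (middleGraph G) = (n + 1) / 2 :=
  domNum_middle_of_hamiltonian_path_general G n hord hham
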